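/- Let K ≥ 1 and a₀ > 0, and let f : ℝ → ℝ be K-Lipschitz with |f(y) − f(x)| ≥ K whenever y − x ≥ a₀. Then there exists a map g : ℝ → ℝ with |f(x) − g(x)| ≤ 4Ka₀ for all x ∈ ℝ such that g is K₀-bi-Lipschitz, i.e. K₀⁻¹|x − y| ≤ |g(x) − g(y)| ≤ K₀|x − y| for all x, y, where K₀ = max(2K, 2a₀/K); one may take g piecewise affine, agreeing with f on a net {x_i} with a₀ ≤ x_{i+1} − x_i ≤ 2a₀. -/

import Mathlib

/-!
Since `f` is continuous and `f (x + a₀) - f x` never vanishes, this difference has constant sign,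
so `i ↦ f (i * a₀)` is monotone or antitone with increments of size between `K` and `K * a₀`.
Its piecewise affine interpolation `g` on the grid `a₀ℤ` therefore has slopes of one sign and of
absolute value in `[K / a₀, K]`, which makes it bi-Lipschitz; on each cell `f` and `g` both stay
within `K * a₀` of their common value at the left endpoint.
-/

open Set

theorem mem_Icc_floor_div_mul {a : ℝ} (ha : 0 < a) (t : ℝ) :
    t ∈ Icc (⌊t / a⌋ * a) (⌊t / a⌋ * a + a) := by
  refine ⟨(le_div_iff₀ ha).1 (Int.floor_le _), ?_⟩
  linarith [(div_lt_iff₀ ha).1 (Int.lt_floor_add_one (t / a))]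

theorem monotone_of_monotoneOn_Icc_intCast_mul {a : ℝ} (ha : 0 < a) {φ : ℝ → ℝ}
    (hφ : ∀ i : ℤ, MonotoneOn φ (Icc (i * a) (i * a + a))) : Monotone φ := by
  have hgrid : Monotone fun i : ℤ => φ (i * a) := by
    refine monotone_int_of_le_succ fun i => ?_
    have hle : (i : ℝ) * a ≤ i * a + a := by linarith
    simpa [add_one_mul] using hφ i ⟨le_rfl, hle⟩ ⟨hle, le_rfl⟩ hle
  intro s t hst
  set i := ⌊s / a⌋
  set j := ⌊t / a⌋
  have hs := mem_Icc_floor_div_mul ha s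
  have ht := mem_Icc_floor_div_mul ha t
  rcases (Int.floor_mono (div_le_div_of_nonneg_right hst ha.le)).eq_or_lt with hij | hij
  · rw [hij] at hs
    exact hφ j hs ht hst
  · calc φ s ≤ φ (((i + 1 : ℤ) : ℝ) * a) := by
          rw [Int.cast_add, Int.cast_one, add_one_mul]
          exact hφ i hs ⟨by linarith, le_rfl⟩ hs.2
      _ ≤ φ (j * a) := hgrid (Int.add_one_le_iff.2 hij)
      _ ≤ φ t := hφ j ⟨le_rfl, by linarith⟩ ht ht.1

theorem Continuous.monotone_or_antitone_comp_intCast_mul {f : ℝ → ℝ} (hf : Continuous f)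
    {a : ℝ} (h : ∀ x, f (x + a) ≠ f x) :
    Monotone (fun i : ℤ => f (i * a)) ∨ Antitone (fun i : ℤ => f (i * a)) := by
  have hsign : (∀ x, f x < f (x + a)) ∨ ∀ x, f (x + a) < f x := by
    by_contra! ⟨⟨x, hx⟩, ⟨y, hy⟩⟩
    obtain ⟨z, hz⟩ := intermediate_value_univ x y (f := fun x => f (x + a) - f x) (by fun_prop)
      ⟨sub_nonpos.2 hx, sub_nonneg.2 hy⟩
    exact h z (sub_eq_zero.1 hz)
  have hsucc (i : ℤ) : f (((i + 1 : ℤ) : ℝ) * a) = f (i * a + a) := by push_cast; ring_nf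
  rcases hsign with hpos | hneg
  · exact Or.inl (monotone_int_of_le_succ fun i => hsucc i ▸ (hpos _).le)
  · exact Or.inr (antitone_int_of_succ_le fun i => hsucc i ▸ (hneg _).le)

theorem abs_sub_bounds_of_sub_bounds {G : ℝ → ℝ} {m M : ℝ} (hm : 0 ≤ m)
    (hG : ∀ s t, s ≤ t → m * (t - s) ≤ G t - G s ∧ G t - G s ≤ M * (t - s)) (x y : ℝ) :
    m * |x - y| ≤ |G x - G y| ∧ |G x - G y| ≤ M * |x - y| := by
  wlog hxy : y ≤ x generalizing x y
  · rw [abs_sub_comm x, abs_sub_comm (G x)]; exact this y x (le_of_not_ge hxy)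
  obtain ⟨hlow, hupp⟩ := hG y x hxy
  have hGxy : 0 ≤ G x - G y := (mul_nonneg hm (sub_nonneg.2 hxy)).trans hlow
  rw [abs_of_nonneg (sub_nonneg.2 hxy), abs_of_nonneg hGxy]
  exact ⟨hlow, hupp⟩

noncomputable def gridInterp (a : ℝ) (v : ℤ → ℝ) (t : ℝ) : ℝ :=
  v ⌊t / a⌋ + (v (⌊t / a⌋ + 1) - v ⌊t / a⌋) / a * (t - ⌊t / a⌋ * a)

section gridInterp

variable {a : ℝ} (v : ℤ → ℝ)

theorem gridInterp_neg : gridInterp a (-v) = -gridInterp a v := by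
  ext t; simp only [gridInterp, Pi.neg_apply]; ring

theorem gridInterp_eq_of_mem_Icc (ha : 0 < a) {i : ℤ} {t : ℝ} (ht : t ∈ Icc (i * a) (i * a + a)) :
    gridInterp a v t = v i + (v (i + 1) - v i) / a * (t - i * a) := by
  rcases ht.2.lt_or_eq with hlt | rfl
  · have hfloor : ⌊t / a⌋ = i :=
      Int.floor_eq_iff.2 ⟨(le_div_iff₀ ha).2 ht.1, (div_lt_iff₀ ha).2 (by linarith)⟩
    rw [gridInterp, hfloor]
  · have hfloor : ⌊(i * a + a) / a⌋ = i + 1 := by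
      rw [← add_one_mul, mul_div_cancel_right₀ _ ha.ne']; exact_mod_cast Int.floor_intCast (i + 1)
    rw [gridInterp, hfloor]
    field_simp
    push_cast
    ring

theorem gridInterp_intCast_mul (ha : 0 < a) (i : ℤ) : gridInterp a v (i * a) = v i := by
  rw [gridInterp_eq_of_mem_Icc v ha ⟨le_rfl, by linarith⟩, sub_self, mul_zero, add_zero]

theorem gridInterp_sub_of_mem_Icc (ha : 0 < a) {i : ℤ} {s t : ℝ}
    (hs : s ∈ Icc (i * a) (i * a + a)) (ht : t ∈ Icc (i * a) (i * a + a)) :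
    gridInterp a v t - gridInterp a v s = (v (i + 1) - v i) / a * (t - s) := by
  rw [gridInterp_eq_of_mem_Icc v ha ht, gridInterp_eq_of_mem_Icc v ha hs]
  ring

theorem gridInterp_sub_bounds (ha : 0 < a) {m M : ℝ}
    (hv : ∀ i, m * a ≤ v (i + 1) - v i ∧ v (i + 1) - v i ≤ M * a) {s t : ℝ} (hst : s ≤ t) :
    m * (t - s) ≤ gridInterp a v t - gridInterp a v s ∧
      gridInterp a v t - gridInterp a v s ≤ M * (t - s) := by
  have hslope (i : ℤ) : m ≤ (v (i + 1) - v i) / a ∧ (v (i + 1) - v i) / a ≤ M :=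
    ⟨(le_div_iff₀ ha).2 (hv i).1, (div_le_iff₀ ha).2 (hv i).2⟩
  have hlow : Monotone fun u => gridInterp a v u - m * u :=
    monotone_of_monotoneOn_Icc_intCast_mul ha fun i u hu w hw huw => by
      have := gridInterp_sub_of_mem_Icc v ha hu hw
      nlinarith [(hslope i).1]
  have hupp : Monotone fun u => M * u - gridInterp a v u :=
    monotone_of_monotoneOn_Icc_intCast_mul ha fun i u hu w hw huw => by
      have := gridInterp_sub_of_mem_Icc v ha hu hw
      nlinarith [(hslope i).2]
  exact ⟨by linarith [hlow hst], by linarith [hupp hst]⟩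

theorem gridInterp_abs_sub_bounds (ha : 0 < a) {m M : ℝ} (hm : 0 ≤ m)
    (hv : Monotone v ∨ Antitone v)
    (hinc : ∀ i, m * a ≤ |v (i + 1) - v i| ∧ |v (i + 1) - v i| ≤ M * a) (x y : ℝ) :
    m * |x - y| ≤ |gridInterp a v x - gridInterp a v y| ∧
      |gridInterp a v x - gridInterp a v y| ≤ M * |x - y| := by
  wlog hmono : Monotone v generalizing v
  · have := this (-v) (Or.inl (hv.resolve_left hmono).neg)
      (fun i => by rw [Pi.neg_apply, Pi.neg_apply, neg_sub_neg, abs_sub_comm]; exact hinc i)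
      (hv.resolve_left hmono).neg
    rwa [gridInterp_neg, Pi.neg_apply, Pi.neg_apply, neg_sub_neg,
      abs_sub_comm (gridInterp a v y)] at this
  refine abs_sub_bounds_of_sub_bounds hm
    (fun s t hst => gridInterp_sub_bounds v ha (fun i => ?_) hst) x y
  rw [← abs_of_nonneg (sub_nonneg.2 (hmono (lt_add_one i).le))]
  exact hinc i

theorem abs_sub_gridInterp_le (ha : 0 < a) {K : ℝ} (hK : 0 ≤ K) {f : ℝ → ℝ}
    (hf : ∀ x y, |f y - f x| ≤ K * |y - x|) (t : ℝ) :
    |f t - gridInterp a (fun i => f (i * a)) t| ≤ 2 * K * a := by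
  set i := ⌊t / a⌋
  have ht := mem_Icc_floor_div_mul ha t
  have hdist : |t - i * a| ≤ a := abs_le.2 ⟨by linarith [ht.1], by linarith [ht.2]⟩
  have hslope : |(f (((i + 1 : ℤ) : ℝ) * a) - f (i * a)) / a| ≤ K := by
    rw [abs_div, abs_of_pos ha, div_le_iff₀ ha, Int.cast_add, Int.cast_one, add_one_mul]
    simpa [abs_of_pos ha] using hf (i * a) (i * a + a)
  rw [gridInterp_eq_of_mem_Icc _ ha ht]
  calc |f t - (f (i * a) + (f (((i + 1 : ℤ) : ℝ) * a) - f (i * a)) / a * (t - i * a))|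
      ≤ |f t - f (i * a)| + |(f (((i + 1 : ℤ) : ℝ) * a) - f (i * a)) / a| * |t - i * a| := by
        rw [← abs_mul]; exact (abs_sub _ _).trans_eq' (by ring_nf)
    _ ≤ K * a + K * a := by
        gcongr
        exact (hf _ _).trans (by gcongr)
    _ = 2 * K * a := by ring

end gridInterp

/-- **Bi-Lipschitz reparametrization of a displacing Lipschitz map of `ℝ`.**
Let `K ≥ 1` and `a₀ > 0`, and let `f : ℝ → ℝ` be `K`-Lipschitz with `|f y − f x| ≥ K`
whenever `y − x ≥ a₀`.  Then there is a map `g : ℝ → ℝ` with `|f x − g x| ≤ 4Ka₀` for all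
`x` such that `g` is `K₀`-bi-Lipschitz for `K₀ = max (2K) (2a₀/K)`; one may take `g`
piecewise affine, agreeing with `f` on a net `{x i}` with `a₀ ≤ x (i+1) − x i ≤ 2a₀`.

This is the one-dimensional content of the bi-Lipschitz reparametrization lemma for
tube-boundary leaf maps in the proof of the bi-Lipschitz model theorem. -/
theorem exists_biLipschitz_approx
    (K a₀ : ℝ) (hK : 1 ≤ K) (ha₀ : 0 < a₀) (f : ℝ → ℝ)
    (hlip : ∀ x y : ℝ, |f y - f x| ≤ K * |y - x|)
    (hdisp : ∀ x y : ℝ, a₀ ≤ y - x → K ≤ |f y - f x|) :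
    ∃ g : ℝ → ℝ,
      (∀ x : ℝ, |f x - g x| ≤ 4 * K * a₀) ∧
      (∀ x y : ℝ,
        (max (2 * K) (2 * a₀ / K))⁻¹ * |x - y| ≤ |g x - g y| ∧
        |g x - g y| ≤ max (2 * K) (2 * a₀ / K) * |x - y|) ∧
      -- one may take `g` piecewise affine, agreeing with `f` on a net at scale `a₀`:
      ∃ x : ℤ → ℝ,
        (∀ i : ℤ, a₀ ≤ x (i + 1) - x i ∧ x (i + 1) - x i ≤ 2 * a₀) ∧
        (∀ i : ℤ, g (x i) = f (x i)) ∧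
        (∀ i : ℤ, ∀ t ∈ Set.Icc (x i) (x (i + 1)), ∀ s ∈ Set.Icc (x i) (x (i + 1)),
          x i < x (i + 1) →
          g t - g s = ((f (x (i + 1)) - f (x i)) / (x (i + 1) - x i)) * (t - s)) := by
  have hK0 : 0 < K := by linarith
  have hstep (i : ℤ) : ((i + 1 : ℤ) : ℝ) * a₀ = i * a₀ + a₀ := by push_cast; ring
  have hf : Continuous f := (LipschitzWith.of_dist_le_mul (K := ⟨K, hK0.le⟩) fun x y => by
    rw [Real.dist_eq, Real.dist_eq]; exact hlip y x).continuous
  have hdisp_step (x : ℝ) : K ≤ |f (x + a₀) - f x| := hdisp x (x + a₀) (by simp)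
  set v : ℤ → ℝ := fun i => f (i * a₀)
  have hv : Monotone v ∨ Antitone v := hf.monotone_or_antitone_comp_intCast_mul fun x hx => by
    simpa [hx, hK0.not_ge] using hdisp_step x
  have hinc (i : ℤ) : K / a₀ * a₀ ≤ |v (i + 1) - v i| ∧ |v (i + 1) - v i| ≤ K * a₀ := by
    simp only [v, hstep, div_mul_cancel₀ K ha₀.ne']
    simpa [abs_of_pos ha₀] using And.intro (hdisp_step _) (hlip (i * a₀) (i * a₀ + a₀))
  have hK₀ : (max (2 * K) (2 * a₀ / K))⁻¹ ≤ K / a₀ ∧ K ≤ max (2 * K) (2 * a₀ / K) := by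
    refine ⟨?_, le_max_of_le_left (by linarith)⟩
    rw [inv_le_comm₀ (lt_max_of_lt_left (by linarith)) (by positivity), inv_div]
    exact le_max_of_le_right (div_le_div_of_nonneg_right (by linarith) hK0.le)
  refine ⟨gridInterp a₀ v, fun t => ?_, fun x y => ?_, fun i => i * a₀, fun i => ?_,
    gridInterp_intCast_mul v ha₀, fun i t ht s hs _ => ?_⟩
  · nlinarith [abs_sub_gridInterp_le ha₀ hK0.le hlip t]
  · obtain ⟨hlow, hupp⟩ := gridInterp_abs_sub_bounds v ha₀ (by positivity) hv hinc x y
    exact ⟨(mul_le_mul_of_nonneg_right hK₀.1 (abs_nonneg _)).trans hlow,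
      hupp.trans (mul_le_mul_of_nonneg_right hK₀.2 (abs_nonneg _))⟩
  · simp only [hstep]; constructor <;> linarith
  · simp only [hstep, add_sub_cancel_left] at ht hs ⊢
    simpa only [v, hstep] using gridInterp_sub_of_mem_Icc v ha₀ hs ht
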